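/- Bernstein–Vazirani correctness: let f : (Z/2)^N → Z/2 be given by f(x) = a·x for a fixed a ∈ (Z/2)^N. Then the state (1/2^N) ∑_{z} ∑_{x} (-1)^{x·z + f(x)} |z⟩ equals |a⟩; in particular, a single application of the phase oracle between Hadamard layers determines a exactly. -/
import Mathlib


open Finset

lemma bv_cases (s : ZMod 2) : s = 0 ∨ s = 1 := by revert s; decide

lemma bv_sign (s : ZMod 2) : ((-1 : ℂ)) ^ ((s + 1).val) = -(-1 : ℂ) ^ s.val := by
  rcases bv_cases s with h | h <;> subst h
  · show (-1 : ℂ) ^ (1 : ℕ) = -(-1 : ℂ) ^ (0 : ℕ)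
    norm_num
  · show (-1 : ℂ) ^ (0 : ℕ) = -(-1 : ℂ) ^ (1 : ℕ)
    norm_num

/-- Bernstein–Vazirani correctness: with f(x) = a·x, the state
(1/2^N) ∑_z ∑_x (-1)^{x·z + f(x)} |z⟩ equals the basis state |a⟩. -/
theorem bernstein_vazirani (N : ℕ) (hN : 1 ≤ N) (a : Fin N → ZMod 2)
    (f : (Fin N → ZMod 2) → ZMod 2) (hf : ∀ x, f x = ∑ i, a i * x i) :
    (fun z : Fin N → ZMod 2 =>
        (1 / (2 : ℂ) ^ N) *
          ∑ x : Fin N → ZMod 2, (-1 : ℂ) ^ ((∑ i, x i * z i) + f x).val) =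
      fun z : Fin N → ZMod 2 => if z = a then 1 else 0 := by
  funext z
  set w : Fin N → ZMod 2 := fun i => z i + a i with hw
  have hexp : ∀ x : Fin N → ZMod 2,
      (∑ i, x i * z i) + f x = ∑ i, x i * w i := by
    intro x
    rw [hf, ← Finset.sum_add_distrib]
    refine Finset.sum_congr rfl fun i _ => ?_
    simp [hw, mul_add, mul_comm]
  simp only [hexp]
  by_cases hz : z = a
  · subst hz
    have hw0 : ∀ i, w i = 0 := by
      intro i
      have := bv_cases (z i)
      simp only [hw]
      rcases this with h | h <;> rw [h] <;> decide
    simp only [hw0, mul_zero, Finset.sum_const_zero]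
    simp [Finset.card_univ, Fintype.card_fun]
  · simp only [if_neg hz]
    have hne : ∃ i, w i ≠ 0 := by
      by_contra h
      push_neg at h
      apply hz
      funext i
      have := h i
      simp only [hw] at this
      rcases bv_cases (z i) with h1 | h1 <;> rcases bv_cases (a i) with h2 | h2 <;>
        rw [h1, h2] <;> first | rfl | (rw [h1, h2] at this; exact absurd this (by decide))
    obtain ⟨i, hi⟩ := hne
    have hwi : w i = 1 := by
      rcases bv_cases (w i) with h | h
      · exact absurd h hi
      · exact h
    set g : (Fin N → ZMod 2) → ℂ := fun x => (-1 : ℂ) ^ ((∑ j, x j * w j).val) with hg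
    set e : (Fin N → ZMod 2) → (Fin N → ZMod 2) :=
      fun x => Function.update x i (x i + 1) with he
    have hinv : Function.Involutive e := by
      intro x
      funext j
      by_cases hj : j = i
      · subst hj
        simp [he, Function.update_self]
        rcases bv_cases (x j) with h | h <;> rw [h] <;> decide
      · simp [he, Function.update_of_ne hj]
    have key : ∀ x, g (e x) = - g x := by
      intro x
      have hs : ∑ j, (e x) j * w j = (∑ j, x j * w j) + 1 := by
        rw [← Finset.add_sum_erase _ (fun j => (e x) j * w j) (Finset.mem_univ i),
            ← Finset.add_sum_erase _ (fun j => x j * w j) (Finset.mem_univ i)]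
        have herase : ∑ j ∈ Finset.univ.erase i, (e x) j * w j
            = ∑ j ∈ Finset.univ.erase i, x j * w j := by
          refine Finset.sum_congr rfl fun j hj => ?_
          rw [he]
          simp [Function.update_of_ne (Finset.ne_of_mem_erase hj)]
        rw [herase]
        simp only [he, Function.update_self, hwi, mul_one]
        ring
      rw [hg]
      simp only [hs]
      exact bv_sign _
    have hperm : ∑ x : Fin N → ZMod 2, g (e x) = ∑ x : Fin N → ZMod 2, g x :=
      Function.Bijective.sum_comp hinv.bijective g
    have hS : ∑ x : Fin N → ZMod 2, g x = 0 := by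
      have h2 : ∑ x : Fin N → ZMod 2, g x = - ∑ x : Fin N → ZMod 2, g x := by
        conv_lhs => rw [← hperm]
        rw [show (∑ x : Fin N → ZMod 2, g (e x)) = ∑ x : Fin N → ZMod 2, -(g x) from
          Finset.sum_congr rfl fun x _ => key x, Finset.sum_neg_distrib]
      linear_combination (1/2 : ℂ) * h2
    rw [show (∑ x : Fin N → ZMod 2, (-1:ℂ) ^ ((∑ j, x j * w j).val)) = ∑ x, g x from rfl, hS]
    ring
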